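/- Let T be a finite plane tree with T ≠ {∅}, and let ι : T∖{∅} → (rot T)° be the unique lexicographic-order-preserving bijection from the non-root vertices of T onto the internal vertices of rot T. Then for every u ∈ T∖{∅}, the height of ι(u) in rot T equals |u| − 1 + L(u). -/

import Mathlib

inductive PTree : Type
  | node : List PTree → PTree

namespace PTree

instance : Inhabited PTree := ⟨node []⟩

mutual
def size : PTree → ℕ
  | node ts => 1 + sizeList ts
def sizeList : List PTree → ℕ
  | [] => 0
  | t :: ts => size t + sizeList ts
end

def deg : PTree → ℕ
  | node ts => ts.length

mutual
def degreesAux : PTree → List ℕ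
  | node ts => ts.length :: degreesListAux ts
def degreesListAux : List PTree → List ℕ
  | [] => []
  | t :: ts => degreesAux t ++ degreesListAux ts
end

mutual
def heightsAux : PTree → ℕ → List ℕ
  | node ts, d => d :: heightsListAux ts (d + 1)
def heightsListAux : List PTree → ℕ → List ℕ
  | [], _ => []
  | t :: ts, d => heightsAux t d ++ heightsListAux ts d
end

mutual
def contourAux : PTree → ℕ → List ℕ
  | node ts, d => d :: contourListAux ts (d + 1)
def contourListAux : List PTree → ℕ → List ℕ
  | [], _ => []
  | t :: ts, d => contourAux t d ++ (d - 1) :: contourListAux ts d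
end

mutual
def verticesAux : PTree → List ℕ → List (List ℕ)
  | node ts, p => p :: verticesListAux ts p 0
def verticesListAux : List PTree → List ℕ → ℕ → List (List ℕ)
  | [], _, _ => []
  | t :: ts, p, i => verticesAux t (p ++ [i]) ++ verticesListAux ts p (i + 1)
end

def vertices (T : PTree) : List (List ℕ) := verticesAux T []

/-- Height process of a plane tree. -/
def H (T : PTree) (k : ℕ) : ℕ := (heightsAux T 0).getD k 0

/-- Contour process of a plane tree. -/
def C (T : PTree) (k : ℕ) : ℕ := (contourAux T 0).getD k 0

/-- Łukasiewicz walk of a plane tree. -/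
def S (T : PTree) (k : ℕ) : ℤ :=
  (((degreesAux T).take k).map (fun d => (d : ℤ) - 1)).sum

def subtreeAt : List ℕ → PTree → Option PTree
  | [], t => some t
  | i :: p, node ts => (ts[i]?).bind (subtreeAt p)

def isInternal (T : PTree) (p : List ℕ) : Bool :=
  match subtreeAt p T with
  | some (node (_ :: _)) => true
  | _ => false

def isVertex (T : PTree) (p : List ℕ) : Bool := (subtreeAt p T).isSome

def rot : PTree → PTree
  | node [] => node []
  | node (t :: ts) => node [rot t, rot (node ts)]

mutual
def corot : PTree → PTree
  | node ts => corotAux ts (node [])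
def corotAux : List PTree → PTree → PTree
  | [], acc => acc
  | t :: ts, acc => corotAux ts (node [acc, corot t])
end

mutual
def mirror : PTree → PTree
  | node ts => node (mirrorList ts)
def mirrorList : List PTree → List PTree
  | [] => []
  | t :: ts => mirrorList ts ++ [mirror t]
end

mutual
def internalTree : PTree → PTree
  | node ts => node (internalList ts)
def internalList : List PTree → List PTree
  | [] => []
  | node [] :: ts => internalList ts
  | t :: ts => internalTree t :: internalList ts
end

def mirrorPath : PTree → List ℕ → List ℕ
  | _, [] => []
  | node ts, i :: p =>
      (ts.length - 1 - i) ::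
        (match ts[i]? with
         | some t => mirrorPath t p
         | none => p)

def lexLt : List ℕ → List ℕ → Bool
  | _, [] => false
  | [], _ :: _ => true
  | a :: as, b :: bs => if a < b then true else if a = b then lexLt as bs else false

def nonRootVertices (T : PTree) : List (List ℕ) := (vertices T).tail

def internalVertices (T : PTree) : List (List ℕ) :=
  (vertices T).filter (fun p => isInternal T p)

/-- the order-preserving identification between non-root vertices of `T` and
internal vertices of `rot T`. -/
def iota (T : PTree) (u : List ℕ) : List ℕ :=
  (internalVertices (rot T)).getD ((nonRootVertices T).idxOf u) []

/-- `L(u)`: number of edges grafted on the left of the ancestral line of `u`. -/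
def Lnum (T : PTree) (u : List ℕ) : ℕ :=
  ((vertices T).filter (fun w =>
      !w.isEmpty && (w.dropLast.isPrefixOf u && w.dropLast != u)
        && !(w.isPrefixOf u && w != u) && lexLt w u)).length

/-- mirrored enumeration of `T`. -/
def mirroredEnum (T : PTree) (k : ℕ) : List ℕ :=
  mirrorPath (mirror T) ((vertices (mirror T)).getD k [])

def descendR (T : PTree) : ℕ → List ℕ → List ℕ
  | 0, p => p
  | fuel + 1, p => if isInternal T (p ++ [1]) then descendR T fuel (p ++ [1]) else p

def ascend (visited : List (List ℕ)) : ℕ → List ℕ → List ℕ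
  | 0, p => p.dropLast
  | fuel + 1, p => if p.dropLast ∈ visited then ascend visited fuel p.dropLast else p.dropLast

def rightmostSeq (T : PTree) : ℕ → List (List ℕ)
  | 0 => []
  | k + 1 =>
      let prev := rightmostSeq T k
      let next :=
        match prev.getLast? with
        | none => descendR T (size T) []
        | some p =>
            if isInternal T (p ++ [0]) then descendR T (size T) (p ++ [0])
            else ascend prev (size T) p
      prev ++ [next]

def Hstar (T : PTree) (k : ℕ) : ℤ :=
  if k = 0 ∨ size T ≤ k then 0 else ((iota T (mirroredEnum T k)).length : ℤ)

end PTree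

open PTree

/-!
Both sides obey the same recursion along the decomposition `T = node (t :: ts)` into the first
root subtree and the rest, for which `rot T = node [rot t, rot (node ts)]`. The lexicographic
enumerations of `T ∖ {∅}` and of `(rot T)°` match blockwise: `[0]` goes to the root of `rot T`,
`0 :: u` to `0 :: ι_t(u)` in the left subtree, and `(j + 1) :: u` to `1 :: ι_{node ts}(j :: u)` in
the right subtree. In the first two cases `L` is inherited from `t`; in the last one the height
gains one, and so does `L`, through the edge `[0]` grafted on the left of the ancestral line.
-/

namespace List

theorem modifyHead_injective {α : Type*} {f : α → α} (hf : Function.Injective f) :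
    Function.Injective (modifyHead f) := by
  rintro (_ | ⟨a, l⟩) (_ | ⟨b, m⟩) h <;> simp_all [hf.eq_iff]

variable {α β γ δ : Type*} [BEq α] [LawfulBEq α] [BEq γ] [LawfulBEq γ]

theorem idxOf_map_of_injective {f : α → γ} (hf : Function.Injective f) (l : List α) (a : α) :
    (l.map f).idxOf (f a) = l.idxOf a := by
  induction l with
  | nil => rfl
  | cons x l ih =>
    have hbeq : (f x == f a) = (x == a) := Bool.eq_iff_iff.2 (by simp [hf.eq_iff])
    rw [map_cons, idxOf_cons, idxOf_cons, ih, hbeq]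

theorem getD_map_idxOf_map {f : α → γ} (hf : Function.Injective f) (g : β → δ) {l : List α}
    {m : List β} {a : α} (ha : a ∈ l) (hlm : l.length ≤ m.length) (d : δ) (d' : β) :
    (m.map g).getD ((l.map f).idxOf (f a)) d = g (m.getD (l.idxOf a) d') := by
  have hlt : l.idxOf a < m.length := (idxOf_lt_length_of_mem ha).trans_le hlm
  rw [idxOf_map_of_injective hf, getD_eq_getElem _ _ (by simpa using hlt),
    getD_eq_getElem _ _ hlt, getElem_map]

theorem getD_idxOf_append_of_mem {l₁ l₂ : List α} {m₁ m₂ : List β} {a : α} (ha : a ∈ l₁)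
    (hlm : l₁.length = m₁.length) (d : β) :
    (m₁ ++ m₂).getD ((l₁ ++ l₂).idxOf a) d = m₁.getD (l₁.idxOf a) d := by
  rw [idxOf_append_of_mem ha, getD_append _ _ _ _ (hlm ▸ idxOf_lt_length_of_mem ha)]

theorem getD_idxOf_append_of_notMem {l₁ l₂ : List α} {m₁ m₂ : List β} {a : α} (ha : a ∉ l₁)
    (hlm : l₁.length = m₁.length) (d : β) :
    (m₁ ++ m₂).getD ((l₁ ++ l₂).idxOf a) d = m₂.getD (l₂.idxOf a) d := by
  rw [idxOf_append_of_notMem ha, getD_append_right _ _ _ _ (by omega), hlm, Nat.add_sub_cancel_left]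

end List

namespace PTree

open List

@[elab_as_elim]
theorem cons_induction {P : PTree → Prop} (nil : P (node []))
    (cons : ∀ t ts, P t → P (node ts) → P (node (t :: ts))) : ∀ T, P T
  | node [] => nil
  | node (t :: ts) => cons t ts (cons_induction nil cons t) (cons_induction nil cons (node ts))

mutual
theorem verticesAux_eq_map_append : ∀ (t : PTree) (p : List ℕ),
    verticesAux t p = (verticesAux t []).map (p ++ ·)
  | node ts, p => by
    rw [verticesAux, verticesAux, verticesListAux_eq_map_append ts p 0]
    simp
theorem verticesListAux_eq_map_append : ∀ (ts : List PTree) (p : List ℕ) (i : ℕ),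
    verticesListAux ts p i = (verticesListAux ts [] i).map (p ++ ·)
  | [], p, i => by rw [verticesListAux, verticesListAux, map_nil]
  | t :: ts, p, i => by
    rw [verticesListAux, verticesListAux, verticesAux_eq_map_append t (p ++ [i]),
      verticesAux_eq_map_append t ([] ++ [i]), verticesListAux_eq_map_append ts p (i + 1),
      verticesListAux_eq_map_append ts [] (i + 1)]
    simp [Function.comp_def]
end

theorem verticesListAux_succ : ∀ (ts : List PTree) (i : ℕ),
    verticesListAux ts [] (i + 1) = (verticesListAux ts [] i).map (modifyHead (· + 1))
  | [], i => by rw [verticesListAux, verticesListAux, map_nil]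
  | t :: ts, i => by
    rw [verticesListAux, verticesListAux, verticesAux_eq_map_append t ([] ++ [i + 1]),
      verticesAux_eq_map_append t ([] ++ [i]), verticesListAux_succ ts (i + 1)]
    simp [Function.comp_def]

theorem vertices_eq_nil_cons (T : PTree) : vertices T = [] :: nonRootVertices T := by
  cases T
  rw [nonRootVertices, vertices, verticesAux, tail_cons]

theorem nonRootVertices_nil : nonRootVertices (node []) = [] := rfl

theorem nonRootVertices_cons (t : PTree) (ts : List PTree) :
    nonRootVertices (node (t :: ts)) =
      [0] :: ((nonRootVertices t).map (0 :: ·) ++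
        (nonRootVertices (node ts)).map (modifyHead (· + 1))) := by
  rw [nonRootVertices, vertices, verticesAux, tail_cons, verticesListAux,
    verticesAux_eq_map_append, verticesListAux_succ, ← vertices, vertices_eq_nil_cons]
  simp [nonRootVertices, vertices, verticesAux]

theorem nil_notMem_nonRootVertices (T : PTree) : [] ∉ nonRootVertices T := by
  induction T using cons_induction with
  | nil => simp [nonRootVertices_nil]
  | cons t ts _ ih =>
    simp only [nonRootVertices_cons, mem_cons, mem_append, mem_map, modifyHead_eq_nil_iff]
    grind

theorem ne_nil_of_mem_nonRootVertices {T : PTree} {u : List ℕ} (hu : u ∈ nonRootVertices T) :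
    u ≠ [] :=
  ne_of_mem_of_not_mem hu (nil_notMem_nonRootVertices T)

theorem vertices_node_pair (A B : PTree) :
    vertices (node [A, B]) = [] :: ((vertices A).map (0 :: ·) ++ (vertices B).map (1 :: ·)) := by
  rw [vertices_eq_nil_cons, nonRootVertices_cons, nonRootVertices_cons, nonRootVertices_nil,
    vertices_eq_nil_cons A, vertices_eq_nil_cons B]
  simp [Function.comp_def]

theorem isInternal_node_pair_zero (A B : PTree) (p : List ℕ) :
    isInternal (node [A, B]) (0 :: p) = isInternal A p := rfl

theorem isInternal_node_pair_one (A B : PTree) (p : List ℕ) :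
    isInternal (node [A, B]) (1 :: p) = isInternal B p := rfl

theorem internalVertices_node_pair (A B : PTree) :
    internalVertices (node [A, B]) =
      [] :: ((internalVertices A).map (0 :: ·) ++ (internalVertices B).map (1 :: ·)) := by
  simp only [internalVertices, vertices_node_pair, filter_cons, filter_append, filter_map,
    Function.comp_def, isInternal_node_pair_zero, isInternal_node_pair_one]
  rfl

theorem internalVertices_rot_cons (t : PTree) (ts : List PTree) :
    internalVertices (rot (node (t :: ts))) =
      [] :: ((internalVertices (rot t)).map (0 :: ·) ++
        (internalVertices (rot (node ts))).map (1 :: ·)) := by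
  rw [rot, internalVertices_node_pair]

theorem length_internalVertices_rot (T : PTree) :
    (internalVertices (rot T)).length = (nonRootVertices T).length := by
  induction T using cons_induction with
  | nil => rw [rot]; rfl
  | cons t ts iht ihts =>
    simp [internalVertices_rot_cons, nonRootVertices_cons, iht, ihts]

theorem iota_cons_zero_nil (t : PTree) (ts : List PTree) : iota (node (t :: ts)) [0] = [] := by
  rw [iota, nonRootVertices_cons, idxOf_cons_self, internalVertices_rot_cons, getD_cons_zero]

theorem iota_cons_zero (t : PTree) (ts : List PTree) {u : List ℕ}
    (hu : u ∈ nonRootVertices t) : iota (node (t :: ts)) (0 :: u) = 0 :: iota t u := by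
  have hu₀ : [0] ≠ 0 :: u := by
    simpa [eq_comm] using ne_nil_of_mem_nonRootVertices hu
  rw [iota, nonRootVertices_cons, internalVertices_rot_cons, idxOf_cons_ne _ hu₀,
    getD_cons_succ, getD_idxOf_append_of_mem (mem_map_of_mem hu)
      (by simp [length_internalVertices_rot]),
    getD_map_idxOf_map cons_injective _ hu (length_internalVertices_rot t).ge _ [], iota]

theorem iota_cons_succ (t : PTree) (ts : List PTree) {j : ℕ} {u : List ℕ}
    (hu : j :: u ∈ nonRootVertices (node ts)) :
    iota (node (t :: ts)) ((j + 1) :: u) = 1 :: iota (node ts) (j :: u) := by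
  rw [iota, nonRootVertices_cons, internalVertices_rot_cons, idxOf_cons_ne _ (by simp),
    getD_cons_succ, getD_idxOf_append_of_notMem (by simp) (by simp [length_internalVertices_rot]),
    show (j + 1) :: u = (j :: u).modifyHead (· + 1) from rfl,
    getD_map_idxOf_map (modifyHead_injective (add_left_injective 1)) _ hu
      (length_internalVertices_rot _).ge _ [], iota]

theorem lexLt_nil_right (l : List ℕ) : lexLt l [] = false := by
  cases l <;> rw [lexLt]

theorem lexLt_cons_self (a : ℕ) (l m : List ℕ) : lexLt (a :: l) (a :: m) = lexLt l m := by
  simp [lexLt]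

theorem lexLt_cons_cons_of_lt {a b : ℕ} (h : b < a) (l m : List ℕ) :
    lexLt (b :: l) (a :: m) = true := by
  simp [lexLt, h]

theorem lexLt_cons_cons_of_gt {a b : ℕ} (h : a < b) (l m : List ℕ) :
    lexLt (b :: l) (a :: m) = false := by
  simp [lexLt, Nat.lt_asymm h, h.ne']

def graftedLeft (u w : List ℕ) : Bool :=
  !w.isEmpty && (w.dropLast.isPrefixOf u && w.dropLast != u)
    && !(w.isPrefixOf u && w != u) && lexLt w u

theorem graftedLeft_nil_left (w : List ℕ) : graftedLeft [] w = false := by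
  simp [graftedLeft, lexLt_nil_right]

theorem graftedLeft_nil_right (u : List ℕ) : graftedLeft u [] = false := rfl

theorem graftedLeft_cons_cons_self (a : ℕ) (u w : List ℕ) :
    graftedLeft (a :: u) (a :: w) = graftedLeft u w := by
  rcases w with _ | ⟨c, w⟩
  · cases u <;> simp [graftedLeft, lexLt]
  · simp [graftedLeft, dropLast_cons_cons, lexLt_cons_self, bne, cons_beq_cons]

theorem graftedLeft_cons_cons_of_lt {a b : ℕ} (h : b < a) (u w : List ℕ) :
    graftedLeft (a :: u) (b :: w) = w.isEmpty := by
  rcases w with _ | ⟨c, w⟩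
  · simp [graftedLeft, lexLt_cons_cons_of_lt h, isPrefixOf_cons_cons, h.ne]
  · simp [graftedLeft, dropLast_cons_cons, h.ne]

theorem graftedLeft_cons_cons_of_gt {a b : ℕ} (h : a < b) (u w : List ℕ) :
    graftedLeft (a :: u) (b :: w) = false := by
  simp [graftedLeft, lexLt_cons_cons_of_gt h]

theorem graftedLeft_zero_cons_modifyHead_succ (u w : List ℕ) :
    graftedLeft (0 :: u) (w.modifyHead (· + 1)) = false := by
  rcases w with _ | ⟨b, w⟩
  · rfl
  · exact graftedLeft_cons_cons_of_gt b.succ_pos u w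

theorem graftedLeft_succ_cons_modifyHead_succ (j : ℕ) (u w : List ℕ) :
    graftedLeft ((j + 1) :: u) (w.modifyHead (· + 1)) = graftedLeft (j :: u) w := by
  rcases w with _ | ⟨b, w⟩
  · rfl
  rw [modifyHead_cons]
  rcases lt_trichotomy b j with h | rfl | h
  · rw [graftedLeft_cons_cons_of_lt (by omega), graftedLeft_cons_cons_of_lt h]
  · rw [graftedLeft_cons_cons_self, graftedLeft_cons_cons_self]
  · rw [graftedLeft_cons_cons_of_gt (by omega), graftedLeft_cons_cons_of_gt h]

theorem Lnum_eq_countP (T : PTree) (u : List ℕ) :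
    Lnum T u = (nonRootVertices T).countP (graftedLeft u) := by
  change ((vertices T).filter (graftedLeft u)).length = _
  rw [← countP_eq_length_filter, vertices_eq_nil_cons, countP_cons, graftedLeft_nil_right]
  rfl

theorem Lnum_nil (T : PTree) : Lnum T [] = 0 := by
  simp [Lnum_eq_countP, graftedLeft_nil_left]

theorem Lnum_cons_zero (t : PTree) (ts : List PTree) (u : List ℕ) :
    Lnum (node (t :: ts)) (0 :: u) = Lnum t u := by
  simp [Lnum_eq_countP, nonRootVertices_cons, countP_append, countP_map,
    Function.comp_def, graftedLeft_cons_cons_self, graftedLeft_zero_cons_modifyHead_succ,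
    graftedLeft_nil_right]

theorem Lnum_cons_succ (t : PTree) (ts : List PTree) (j : ℕ) (u : List ℕ) :
    Lnum (node (t :: ts)) ((j + 1) :: u) = Lnum (node ts) (j :: u) + 1 := by
  have hfirst : ((nonRootVertices t).map (0 :: ·)).countP (graftedLeft ((j + 1) :: u)) = 0 := by
    refine countP_eq_zero.2 fun v hv => ?_
    obtain ⟨w, hw, rfl⟩ := mem_map.1 hv
    rw [graftedLeft_cons_cons_of_lt j.succ_pos]
    simpa using ne_nil_of_mem_nonRootVertices hw
  rw [Lnum_eq_countP, Lnum_eq_countP, nonRootVertices_cons, countP_cons, countP_append, hfirst,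
    countP_map, graftedLeft_cons_cons_of_lt j.succ_pos]
  simp [Function.comp_def, graftedLeft_succ_cons_modifyHead_succ]

theorem length_iota (T : PTree) {u : List ℕ} (hu : u ∈ nonRootVertices T) :
    (iota T u).length = u.length - 1 + Lnum T u := by
  induction T using cons_induction generalizing u with
  | nil => simp [nonRootVertices_nil] at hu
  | cons t ts iht ihts =>
    simp only [nonRootVertices_cons, mem_cons, mem_append, mem_map] at hu
    rcases hu with rfl | ⟨u, hu, rfl⟩ | ⟨v, hv, rfl⟩
    · rw [iota_cons_zero_nil, Lnum_cons_zero, Lnum_nil]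
      rfl
    · have hu₀ : 0 < u.length := length_pos_iff.2 (ne_nil_of_mem_nonRootVertices hu)
      rw [iota_cons_zero t ts hu, Lnum_cons_zero, length_cons, length_cons, iht hu]
      omega
    · obtain ⟨j, u, rfl⟩ := exists_cons_of_ne_nil (ne_nil_of_mem_nonRootVertices hv)
      rw [modifyHead_cons, iota_cons_succ t ts hv, Lnum_cons_succ, length_cons, ihts hv]
      simp only [length_cons]
      omega

end PTree

theorem stmt9 (T : PTree) (hT : T ≠ .node []) (u : List ℕ)
    (hu : u ∈ vertices T) (hne : u ≠ []) :
    (iota T u).length = u.length - 1 + Lnum T u := by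
  rw [vertices_eq_nil_cons] at hu
  exact length_iota T ((List.mem_cons.1 hu).resolve_left hne)
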